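/- The quasi-Cauchy density γ is differentiable on (0, ∞) and its logarithmic derivative is uniformly bounded there: sup_{u > 0} |γ'(u)/γ(u)| < ∞. -/

import Mathlib

open MeasureTheory Real Filter

/-- The standard normal density. -/
noncomputable def phi (x : ℝ) : ℝ := (Real.sqrt (2 * Real.pi))⁻¹ * Real.exp (-x ^ 2 / 2)

/-- The standard normal cumulative distribution function. -/
noncomputable def Phi (x : ℝ) : ℝ := ∫ t in Set.Iic x, phi t

/-- The upper tail of the standard normal distribution. -/
noncomputable def PhiBar (x : ℝ) : ℝ := 1 - Phi x

/-- The quasi-Cauchy density. -/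
noncomputable def quasiCauchy (u : ℝ) : ℝ :=
  (Real.sqrt (2 * Real.pi))⁻¹ * (1 - |u| * PhiBar |u| / phi u)

lemma phi_pos (x : ℝ) : 0 < phi x := by
  apply mul_pos (inv_pos.2 (Real.sqrt_pos.2 (by positivity))) (Real.exp_pos _)

lemma phi_eq (x : ℝ) : phi x = (Real.sqrt (2 * Real.pi))⁻¹ * Real.exp (-(1/2) * x ^ 2) := by
  unfold phi; ring_nf

lemma continuous_phi : Continuous phi := by
  unfold phi; continuity

lemma integrable_phi : Integrable phi := by
  have h := (integrable_exp_neg_mul_sq (by norm_num : (0:ℝ) < 1/2)).const_mul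
    ((Real.sqrt (2 * Real.pi))⁻¹)
  refine h.congr ?_
  filter_upwards with x
  rw [phi_eq]

lemma integral_phi : ∫ x, phi x = 1 := by
  have h : ∫ x : ℝ, Real.exp (-(1/2) * x ^ 2) = Real.sqrt (Real.pi / (1/2)) :=
    integral_gaussian (1/2)
  have : ∫ x, phi x = (Real.sqrt (2 * Real.pi))⁻¹ * ∫ x : ℝ, Real.exp (-(1/2) * x ^ 2) := by
    rw [← integral_const_mul]
    congr 1; ext x; rw [phi_eq]
  rw [this, h]
  rw [show Real.pi / (1/2) = 2 * Real.pi by ring]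
  rw [inv_mul_cancel₀ (by positivity)]

lemma hasDerivAt_phi (x : ℝ) : HasDerivAt phi (-x * phi x) x := by
  have h1 : HasDerivAt (fun x : ℝ => -x ^ 2 / 2) (-x) x := by
    have := ((hasDerivAt_pow 2 x).neg).div_const 2
    simpa using this.congr_deriv (by ring)
  have h2 := (h1.exp).const_mul ((Real.sqrt (2 * Real.pi))⁻¹)
  exact h2.congr_deriv (by unfold phi; ring)

lemma hasDerivAt_Phi (x : ℝ) : HasDerivAt Phi (phi x) x := by
  have key : ∀ y : ℝ, Phi y = Phi 0 + ∫ t in (0:ℝ)..y, phi t := by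
    intro y
    have := intervalIntegral.integral_Iic_sub_Iic (μ := volume) (f := phi) (a := (0:ℝ)) (b := y)
      (integrable_phi.integrableOn) (integrable_phi.integrableOn)
    unfold Phi
    linarith [this]
  have hd : HasDerivAt (fun y => Phi 0 + ∫ t in (0:ℝ)..y, phi t) (phi x) x := by
    apply HasDerivAt.const_add
    exact intervalIntegral.integral_hasDerivAt_right
      (integrable_phi.intervalIntegrable)
      (continuous_phi.stronglyMeasurable.stronglyMeasurableAtFilter)
      continuous_phi.continuousAt
  exact hd.congr_of_eventuallyEq (by filter_upwards with y; rw [key y])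

lemma PhiBar_eq (x : ℝ) : PhiBar x = ∫ t in Set.Ioi x, phi t := by
  have := intervalIntegral.integral_Iic_add_Ioi (μ := volume) (b := x) (f := phi)
    integrable_phi.integrableOn integrable_phi.integrableOn
  unfold PhiBar Phi
  rw [← integral_phi]
  linarith [this]

lemma hasDerivAt_PhiBar (x : ℝ) : HasDerivAt PhiBar (-phi x) x := by
  unfold PhiBar
  simpa using (hasDerivAt_Phi x).const_sub 1

lemma PhiBar_pos' (x : ℝ) : 0 < PhiBar x := by
  rw [PhiBar_eq]
  apply setIntegral_pos_iff_support_of_nonneg_ae ?_ ?_ |>.2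
  · have : Function.support phi = Set.univ := by
      ext t; simp [Function.support, (phi_pos t).ne']
    rw [this]
    simpa using (measure_Ioi_pos (volume : Measure ℝ) x).trans_le le_top |>.le.trans le_top
  · filter_upwards with t using (phi_pos t).le
  · exact integrable_phi.integrableOn

lemma integrable_id_mul_phi : Integrable (fun t : ℝ => t * phi t) := by
  have h := (integrable_mul_exp_neg_mul_sq (by norm_num : (0:ℝ) < 1/2)).const_mul
    ((Real.sqrt (2 * Real.pi))⁻¹)
  refine h.congr ?_
  filter_upwards with x
  rw [phi_eq]; ring

lemma tendsto_phi_atTop : Tendsto phi atTop (nhds 0) := by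
  rw [show (0:ℝ) = (Real.sqrt (2 * Real.pi))⁻¹ * 0 by ring]
  apply Tendsto.const_mul
  have h1 : Tendsto (fun x : ℝ => x ^ 2 / 2) atTop atTop :=
    (tendsto_pow_atTop (by norm_num)).atTop_div_const (by norm_num)
  have := Real.tendsto_exp_neg_atTop_nhds_zero.comp h1
  refine this.congr fun x => ?_
  simp [Function.comp, neg_div]

lemma integral_id_mul_phi (u : ℝ) : ∫ t in Set.Ioi u, t * phi t = phi u := by
  have := integral_Ioi_of_hasDerivAt_of_tendsto' (a := u) (f := fun t => -phi t)
    (f' := fun t => t * phi t)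
    (fun x _ => ((hasDerivAt_phi x).neg).congr_deriv (by ring))
    (integrable_id_mul_phi.integrableOn)
    (by simpa using tendsto_phi_atTop.neg)
  simpa using this

lemma mul_PhiBar_le {u : ℝ} (hu : 0 ≤ u) : u * PhiBar u ≤ phi u := by
  rw [PhiBar_eq, ← integral_id_mul_phi u, ← integral_const_mul]
  apply setIntegral_mono_on (integrable_phi.integrableOn.const_mul u)
    integrable_id_mul_phi.integrableOn measurableSet_Ioi
  intro t ht
  have : u ≤ t := le_of_lt ht
  nlinarith [phi_pos t]

lemma tendsto_mul_PhiBar : Tendsto (fun u => u * PhiBar u) atTop (nhds 0) := by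
  apply tendsto_of_tendsto_of_tendsto_of_le_of_le' (g := fun _ => (0:ℝ)) (h := phi)
    tendsto_const_nhds tendsto_phi_atTop
  · filter_upwards [eventually_ge_atTop (0:ℝ)] with u hu
    exact mul_nonneg hu (PhiBar_pos' u).le
  · filter_upwards [eventually_ge_atTop (0:ℝ)] with u hu
    exact mul_PhiBar_le hu

lemma tendsto_PhiBar : Tendsto PhiBar atTop (nhds 0) := by
  apply tendsto_of_tendsto_of_tendsto_of_le_of_le' (g := fun _ => (0:ℝ))
    (h := fun u => u * PhiBar u) tendsto_const_nhds tendsto_mul_PhiBar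
  · filter_upwards with u using (PhiBar_pos' u).le
    
  · filter_upwards [eventually_ge_atTop (1:ℝ)] with u hu
    nlinarith [(PhiBar_pos' u).le]

/-- If `f` has negative derivative on `(0,∞)` and tends to `0` at `+∞`, it is positive there. -/
lemma pos_of_deriv_neg_tendsto {f f' : ℝ → ℝ}
    (hd : ∀ x : ℝ, 0 < x → HasDerivAt f (f' x) x)
    (hneg : ∀ x : ℝ, 0 < x → f' x < 0)
    (hlim : Tendsto f atTop (nhds 0)) : ∀ x : ℝ, 0 < x → 0 < f x := by
  intro x hx
  have hanti : StrictAntiOn f (Set.Ioi 0) := by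
    apply strictAntiOn_of_deriv_neg (convex_Ioi 0)
    · intro y hy
      exact (hd y hy).continuousAt.continuousWithinAt
    · intro y hy
      rw [interior_Ioi] at hy
      rw [(hd y hy).deriv]
      exact hneg y hy
  have h1 : f (x + 1) < f x := hanti (Set.mem_Ioi.2 hx) (by simp [Set.mem_Ioi]; linarith) (by linarith)
  have h2 : 0 ≤ f (x + 1) := by
    apply le_of_tendsto hlim
    filter_upwards [eventually_gt_atTop (x + 1)] with y hy
    exact (hanti (by simp [Set.mem_Ioi]; linarith) (by simp [Set.mem_Ioi]; linarith) hy).le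
  linarith

noncomputable def Gf (u : ℝ) : ℝ := phi u - u * PhiBar u

lemma hasDerivAt_Gf (u : ℝ) : HasDerivAt Gf (-PhiBar u) u := by
  have h := (hasDerivAt_phi u).sub ((hasDerivAt_id u).mul (hasDerivAt_PhiBar u))
  refine h.congr_deriv ?_
  simp only [id_eq, one_mul]
  ring

lemma tendsto_Gf : Tendsto Gf atTop (nhds 0) := by
  have := tendsto_phi_atTop.sub tendsto_mul_PhiBar
  show Tendsto (fun u => phi u - u * PhiBar u) atTop (nhds 0)
  simpa [Gf] using this

lemma Gf_pos {u : ℝ} (hu : 0 ≤ u) : 0 < Gf u := by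
  rcases eq_or_lt_of_le hu with h | h
  · simp [Gf, ← h, phi_pos]
  · exact pos_of_deriv_neg_tendsto (f' := fun u => -PhiBar u) (fun x _ => hasDerivAt_Gf x)
      (fun x _ => neg_neg_iff_pos.2 (PhiBar_pos' x)) tendsto_Gf u h

lemma f2_pos {u : ℝ} (hu : 0 < u) : phi u * (u⁻¹ - (u ^ 3)⁻¹) < PhiBar u := by
  have hderiv : ∀ x : ℝ, 0 < x →
      HasDerivAt (fun u : ℝ => PhiBar u - phi u * (u⁻¹ - (u ^ 3)⁻¹))
        (-3 * phi x * (x ^ 4)⁻¹) x := by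
    intro x hx
    have h1 : HasDerivAt (fun y : ℝ => y⁻¹ - (y ^ 3)⁻¹)
        (-(x ^ 2)⁻¹ - -(3 * x ^ 2) / (x ^ 3) ^ 2) x :=
      (hasDerivAt_inv hx.ne').sub
        (((hasDerivAt_pow 3 x).inv (pow_ne_zero 3 hx.ne')).congr_deriv (by norm_num))
    have h := (hasDerivAt_PhiBar x).sub ((hasDerivAt_phi x).mul h1)
    refine h.congr_deriv ?_
    have hx' : x ≠ 0 := hx.ne'
    field_simp
    ring
  have hneg : ∀ x : ℝ, 0 < x → -3 * phi x * (x ^ 4)⁻¹ < 0 := by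
    intro x hx
    have h1 := phi_pos x
    have : 0 < 3 * phi x * (x ^ 4)⁻¹ := by positivity
    linarith
  have hlim : Tendsto (fun u : ℝ => PhiBar u - phi u * (u⁻¹ - (u ^ 3)⁻¹)) atTop (nhds 0) := by
    have h1 : Tendsto (fun u : ℝ => u⁻¹ - (u ^ 3)⁻¹) atTop (nhds 0) := by
      have := tendsto_inv_atTop_zero.sub
        (tendsto_inv_atTop_zero.comp (tendsto_pow_atTop (α := ℝ) (n := 3) (by norm_num)))
      simpa using this
    have := tendsto_PhiBar.sub (tendsto_phi_atTop.mul h1)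
    simpa using this
  have key := pos_of_deriv_neg_tendsto hderiv hneg hlim u hu
  linarith

lemma f3_pos {u : ℝ} (hu : 0 < u) :
    PhiBar u < phi u * (u⁻¹ - (u ^ 3)⁻¹ + 3 * (u ^ 5)⁻¹) := by
  have hderiv : ∀ x : ℝ, 0 < x →
      HasDerivAt (fun u : ℝ => phi u * (u⁻¹ - (u ^ 3)⁻¹ + 3 * (u ^ 5)⁻¹) - PhiBar u)
        (-15 * phi x * (x ^ 6)⁻¹) x := by
    intro x hx
    have h1 : HasDerivAt (fun y : ℝ => y⁻¹ - (y ^ 3)⁻¹ + 3 * (y ^ 5)⁻¹)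
        (-(x ^ 2)⁻¹ - -(3 * x ^ 2) / (x ^ 3) ^ 2 + 3 * (-(5 * x ^ 4) / (x ^ 5) ^ 2)) x :=
      ((hasDerivAt_inv hx.ne').sub
        (((hasDerivAt_pow 3 x).inv (pow_ne_zero 3 hx.ne')).congr_deriv (by norm_num))).add
        ((((hasDerivAt_pow 5 x).inv (pow_ne_zero 5 hx.ne')).congr_deriv (by norm_num)).const_mul 3)
    have h := ((hasDerivAt_phi x).mul h1).sub (hasDerivAt_PhiBar x)
    refine h.congr_deriv ?_
    have hx' : x ≠ 0 := hx.ne'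
    field_simp
    ring
  have hneg : ∀ x : ℝ, 0 < x → -15 * phi x * (x ^ 6)⁻¹ < 0 := by
    intro x hx
    have h1 := phi_pos x
    have : 0 < 15 * phi x * (x ^ 6)⁻¹ := by positivity
    linarith
  have hlim : Tendsto (fun u : ℝ => phi u * (u⁻¹ - (u ^ 3)⁻¹ + 3 * (u ^ 5)⁻¹) - PhiBar u)
      atTop (nhds 0) := by
    have h1 : Tendsto (fun u : ℝ => u⁻¹ - (u ^ 3)⁻¹ + 3 * (u ^ 5)⁻¹) atTop (nhds 0) := by
      have := (tendsto_inv_atTop_zero.sub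
        (tendsto_inv_atTop_zero.comp (tendsto_pow_atTop (α := ℝ) (n := 3) (by norm_num)))).add
        ((tendsto_inv_atTop_zero.comp (tendsto_pow_atTop (α := ℝ) (n := 5) (by norm_num))).const_mul 3)
      simpa using this
    have := (tendsto_phi_atTop.mul h1).sub tendsto_PhiBar
    simpa using this
  have key := pos_of_deriv_neg_tendsto hderiv hneg hlim u hu
  linarith

lemma quasiCauchy_eq {u : ℝ} (hu : 0 < u) :
    quasiCauchy u = (Real.sqrt (2 * Real.pi))⁻¹ * (Gf u / phi u) := by
  unfold quasiCauchy Gf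
  rw [abs_of_pos hu, sub_div, div_self (phi_pos u).ne']

lemma hasDerivAt_quasiCauchy {u : ℝ} (hu : 0 < u) :
    HasDerivAt quasiCauchy
      ((Real.sqrt (2 * Real.pi))⁻¹ * ((u * Gf u - PhiBar u) / phi u)) u := by
  have hphi := (phi_pos u).ne'
  have hF : HasDerivAt (fun v => (Real.sqrt (2 * Real.pi))⁻¹ * (Gf v / phi v))
      ((Real.sqrt (2 * Real.pi))⁻¹ * ((u * Gf u - PhiBar u) / phi u)) u := by
    have h := ((hasDerivAt_Gf u).div (hasDerivAt_phi u) hphi).const_mul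
      ((Real.sqrt (2 * Real.pi))⁻¹)
    refine h.congr_deriv ?_
    congr 1
    field_simp
    ring
  refine hF.congr_of_eventuallyEq ?_
  filter_upwards [isOpen_Ioi.mem_nhds (Set.mem_Ioi.2 hu)] with v hv
  exact quasiCauchy_eq hv

lemma ratio_eq {u : ℝ} (hu : 0 < u) :
    deriv quasiCauchy u / quasiCauchy u = (u * Gf u - PhiBar u) / Gf u := by
  rw [(hasDerivAt_quasiCauchy hu).deriv, quasiCauchy_eq hu]
  have hphi := (phi_pos u).ne'
  have hG := (Gf_pos hu.le).ne'
  have hc : (Real.sqrt (2 * Real.pi))⁻¹ ≠ 0 := by positivity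
  field_simp

lemma ratio_bound_large {u : ℝ} (hu : 3 ≤ u) :
    |(u * Gf u - PhiBar u) / Gf u| ≤ 3 / 2 := by
  have hu0 : (0:ℝ) < u := by linarith
  have hG : 0 < Gf u := Gf_pos hu0.le
  have hP : 0 < phi u := phi_pos u
  set P := phi u
  set B := PhiBar u
  -- cleared-denominator versions of the Mills bounds
  have h2 : P * (u ^ 2 - 1) < B * u ^ 3 := by
    have := f2_pos hu0
    have e : P * (u⁻¹ - (u ^ 3)⁻¹) = P * (u ^ 2 - 1) / u ^ 3 := by
      field_simp
    rw [e] at this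
    exact (div_lt_iff₀ (by positivity)).mp this
  have h3 : B * u ^ 5 < P * (u ^ 4 - u ^ 2 + 3) := by
    have := f3_pos hu0
    have e : P * (u⁻¹ - (u ^ 3)⁻¹ + 3 * (u ^ 5)⁻¹) = P * (u ^ 4 - u ^ 2 + 3) / u ^ 5 := by
      field_simp
    rw [e] at this
    exact (lt_div_iff₀ (by positivity)).mp this
  rw [abs_div, abs_of_pos hG, div_le_iff₀ hG]
  rw [abs_le]
  have hGf : Gf u = P - u * B := rfl
  have hu5 : (0:ℝ) < u ^ 5 := by positivity
  constructor
  · -- lower bound: -(3/2 * G) ≤ N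
    have key : 0 ≤ (u * Gf u - B + 3 / 2 * Gf u) * u ^ 5 := by
      rw [hGf]
      nlinarith [mul_lt_mul_of_pos_left h3 (show (0:ℝ) < 1 + u ^ 2 by positivity),
        mul_lt_mul_of_pos_left h3 (show (0:ℝ) < 3 / 2 * u by linarith),
        mul_nonneg hP.le (show (0:ℝ) ≤ 3 / 2 * u ^ 3 - 2 * u ^ 2 - 9 / 2 * u - 3 by
          nlinarith [mul_nonneg (sub_nonneg.2 hu)
            (show (0:ℝ) ≤ 3 / 2 * u ^ 2 + 5 / 2 * u + 3 by positivity)])]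
    have := (mul_nonneg_iff_of_pos_right hu5).mp key
    linarith
  · -- upper bound: N ≤ 3/2 * G
    have key : 0 ≤ (3 / 2 * Gf u - (u * Gf u - B)) * u ^ 5 := by
      rw [hGf]
      nlinarith [mul_lt_mul_of_pos_left h2 (show (0:ℝ) < (1 + u ^ 2) * u ^ 2 by positivity),
        mul_lt_mul_of_pos_left h3 (show (0:ℝ) < 3 / 2 * u by linarith),
        mul_nonneg hP.le (show (0:ℝ) ≤ 3 / 2 * u ^ 3 - u ^ 2 - 9 / 2 * u by
          nlinarith [mul_nonneg (mul_nonneg hu0.le (sub_nonneg.2 hu))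
            (show (0:ℝ) ≤ 3 / 2 * u + 7 / 2 by positivity)])]
    have := (mul_nonneg_iff_of_pos_right hu5).mp key
    linarith

noncomputable def Hb (u : ℝ) : ℝ := u - PhiBar u / Gf u

lemma continuous_PhiBar : Continuous PhiBar :=
  continuous_iff_continuousAt.2 fun x => (hasDerivAt_PhiBar x).continuousAt

lemma continuous_Gf : Continuous Gf :=
  continuous_phi.sub (continuous_id.mul continuous_PhiBar)

/-- The quasi-Cauchy density is differentiable on `(0, ∞)` with uniformly bounded
logarithmic derivative there. -/
theorem quasiCauchy_log_deriv_bounded :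
    DifferentiableOn ℝ quasiCauchy (Set.Ioi (0 : ℝ)) ∧
    ∃ M : ℝ, ∀ u : ℝ, 0 < u → |deriv quasiCauchy u / quasiCauchy u| ≤ M := by
  constructor
  · intro u hu
    exact (hasDerivAt_quasiCauchy hu).differentiableAt.differentiableWithinAt
  · have hcont : ContinuousOn (fun u => |Hb u|) (Set.Icc (0:ℝ) 3) := by
      apply ContinuousOn.abs
      apply ContinuousOn.sub continuousOn_id
      apply ContinuousOn.div continuous_PhiBar.continuousOn continuous_Gf.continuousOn
      intro x hx
      exact (Gf_pos hx.1).ne'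
    obtain ⟨x₀, _, hmax⟩ := isCompact_Icc.exists_isMaxOn
      ⟨0, Set.left_mem_Icc.2 (by norm_num)⟩ hcont
    refine ⟨max (3 / 2) |Hb x₀|, fun u hu => ?_⟩
    rw [ratio_eq hu]
    rcases le_or_gt 3 u with h | h
    · exact le_trans (ratio_bound_large h) (le_max_left _ _)
    · have hG := (Gf_pos hu.le).ne'
      have e : (u * Gf u - PhiBar u) / Gf u = Hb u := by
        unfold Hb
        field_simp
      rw [e]
      exact le_trans (hmax ⟨hu.le, h.le⟩) (le_max_right _ _)
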